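/- Let U_1,...,U_N be independent random variables, each uniformly distributed on [0,1] (i.e., distributed according to the N-fold product of the uniform probability measure on [0,1]). Let ε ∈ (0,1), β ∈ (0,1), and let k < N be a natural number satisfying ∑_{i=0}^{k} C(N,i) · ε^i · (1-ε)^{N-i} ≤ β. Then the (N-k)-th order statistic U_(N-k) (the (N-k)-th smallest of U_1,...,U_N) satisfies P(U_(N-k) > 1-ε) ≥ 1-β. -/

import Mathlib

/-!
`U_(N-k) > 1 - ε` says exactly that at least `k + 1` of the `U_i` exceed `1 - ε`. By
independence, the set of indices `i` with `U_i > 1 - ε` equals a given `S` with probability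
`ε ^ #S * (1 - ε) ^ (N - #S)`, so the number of such indices is binomially distributed and the
complementary event, at most `k` of them, has probability
`∑_{i ≤ k} C(N,i) ε^i (1-ε)^(N-i) ≤ β`.
-/

open MeasureTheory Finset

theorem Tuple.lt_apply_sort_iff_card_le {α : Type*} [LinearOrder α] {n : ℕ} (f : Fin n → α)
    (j : Fin n) (a : α) : a < f (sort f j) ↔ #{i | f i ≤ a} ≤ j := by
  have hcard : #{i | f (sort f i) ≤ a} = #{i | f i ≤ a} :=
    card_equiv (sort f) (by simp)
  have := lt_card_le_iff_apply_le_of_monotone (f := f ∘ sort f) (a := a) (j := j)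
    (monotone_sort f)
  simp only [Function.comp_apply, hcard] at this
  rw [← not_le, ← this, not_lt]

section IidCount

variable {ι α : Type*} [Fintype ι] [DecidableEq ι] {s : Set α} [DecidablePred (· ∈ s)]

theorem setOf_filter_mem_eq_pi (S : Finset ι) :
    {ω : ι → α | ({i | ω i ∈ s} : Finset ι) = S}
      = Set.univ.pi fun i => if i ∈ S then s else sᶜ := by
  ext ω
  simp only [Set.mem_ofPred_eq, Finset.ext_iff, mem_filter, mem_univ, true_and, Set.mem_pi,
    Set.mem_univ, forall_const]
  refine forall_congr' fun i => ?_
  split_ifs with hi <;> simp [hi]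

variable [MeasurableSpace α]

theorem measurableSet_setOf_filter_mem_eq (hs : MeasurableSet s) (S : Finset ι) :
    MeasurableSet {ω : ι → α | ({i | ω i ∈ s} : Finset ι) = S} := by
  rw [setOf_filter_mem_eq_pi]
  exact .univ_pi fun i => by split_ifs <;> simp [hs]

variable (μ : Measure α) [SigmaFinite μ]

theorem pi_setOf_filter_mem_eq (S : Finset ι) :
    Measure.pi (fun _ : ι => μ) {ω | ({i | ω i ∈ s} : Finset ι) = S}
      = μ s ^ #S * μ sᶜ ^ (Fintype.card ι - #S) := by
  rw [setOf_filter_mem_eq_pi, Measure.pi_pi]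
  simp only [apply_ite μ]
  rw [prod_ite, prod_const, prod_const]
  simp [filter_not, ← compl_eq_univ_sdiff, card_compl]

theorem measurableSet_setOf_card_filter_mem_eq (hs : MeasurableSet s) (j : ℕ) :
    MeasurableSet {ω : ι → α | #{i | ω i ∈ s} = j} := by
  have : {ω : ι → α | #{i | ω i ∈ s} = j}
      = ⋃ S ∈ powersetCard j (univ : Finset ι), {ω | ({i | ω i ∈ s} : Finset ι) = S} := by
    ext ω; simp
  rw [this]
  exact Finset.measurableSet_biUnion _ fun S _ => measurableSet_setOf_filter_mem_eq hs S

theorem pi_setOf_card_filter_mem_eq (hs : MeasurableSet s) (j : ℕ) :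
    Measure.pi (fun _ : ι => μ) {ω | #{i | ω i ∈ s} = j}
      = (Fintype.card ι).choose j * μ s ^ j * μ sᶜ ^ (Fintype.card ι - j) := by
  let F : (ι → α) → Finset ι := fun ω => {i | ω i ∈ s}
  have : {ω : ι → α | #{i | ω i ∈ s} = j} = F ⁻¹' ↑(powersetCard j (univ : Finset ι)) := by
    ext ω; simp [F]
  rw [this, ← sum_measure_preimage_singleton _ fun S _ => measurableSet_setOf_filter_mem_eq hs S]
  calc ∑ S ∈ powersetCard j univ, Measure.pi (fun _ : ι => μ) (F ⁻¹' {S})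
      = ∑ S ∈ powersetCard j (univ : Finset ι), μ s ^ j * μ sᶜ ^ (Fintype.card ι - j) :=
        sum_congr rfl fun S hS => by
          rw [← (mem_powersetCard.mp hS).2, ← pi_setOf_filter_mem_eq μ S]; rfl
    _ = _ := by rw [sum_const, card_powersetCard, card_univ, nsmul_eq_mul, mul_assoc]

theorem pi_setOf_card_filter_mem_lt_eq (hs : MeasurableSet s) (m : ℕ) :
    Measure.pi (fun _ : ι => μ) {ω | #{i | ω i ∈ s} < m}
      = ∑ j ∈ range m, (Fintype.card ι).choose j * μ s ^ j * μ sᶜ ^ (Fintype.card ι - j) := by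
  have : {ω : ι → α | #{i | ω i ∈ s} < m} = (fun ω => #{i | ω i ∈ s}) ⁻¹' ↑(range m) := by
    ext ω; simp
  rw [this, ← sum_measure_preimage_singleton _ fun j _ =>
    measurableSet_setOf_card_filter_mem_eq hs j]
  exact sum_congr rfl fun j _ => pi_setOf_card_filter_mem_eq μ hs j

end IidCount

instance : IsProbabilityMeasure (volume.restrict (Set.Icc (0 : ℝ) 1)) :=
  ⟨by simp⟩

theorem volume_restrict_Icc_zero_one_Ioi {t : ℝ} (ht : 0 ≤ t) :
    volume.restrict (Set.Icc (0 : ℝ) 1) (Set.Ioi t) = ENNReal.ofReal (1 - t) := by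
  have : Set.Ioi t ∩ Set.Icc 0 1 = Set.Ioc t 1 := by
    ext x; simp only [Set.mem_inter_iff, Set.mem_Ioi, Set.mem_Icc, Set.mem_Ioc]; grind
  rw [Measure.restrict_apply measurableSet_Ioi, this, Real.volume_Ioc]

theorem volume_restrict_Icc_zero_one_Iic {t : ℝ} (ht : t ≤ 1) :
    volume.restrict (Set.Icc (0 : ℝ) 1) (Set.Iic t) = ENNReal.ofReal t := by
  have : Set.Iic t ∩ Set.Icc 0 1 = Set.Icc 0 t := by
    ext x; simp only [Set.mem_inter_iff, Set.mem_Iic, Set.mem_Icc]; grind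
  rw [Measure.restrict_apply measurableSet_Iic, this, Real.volume_Icc, sub_zero]

/-- Uniform-sample form of the conformal calibration guarantee: for `N` i.i.d. uniform random
variables on `[0,1]`, if `k < N` satisfies `∑_{i=0}^{k} C(N,i) ε^i (1-ε)^{N-i} ≤ β`, then the
`(N-k)`-th order statistic exceeds `1-ε` with probability at least `1-β`. -/
theorem uniform_orderStat_calibration (N : ℕ) (ε β : ℝ)
    (hε : ε ∈ Set.Ioo (0 : ℝ) 1) (hβ : β ∈ Set.Ioo (0 : ℝ) 1)
    (k : ℕ) (hk : k < N)
    (hsum : ∑ i ∈ Finset.range (k + 1), (N.choose i : ℝ) * ε ^ i * (1 - ε) ^ (N - i) ≤ β) :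
    ENNReal.ofReal (1 - β) ≤
      (Measure.pi fun _ : Fin N => volume.restrict (Set.Icc (0 : ℝ) 1))
        {ω | 1 - ε < ω (Tuple.sort ω ⟨N - k - 1, by omega⟩)} := by
  obtain ⟨hε0, hε1⟩ := hε
  set μ := volume.restrict (Set.Icc (0 : ℝ) 1)
  set bad := {ω : Fin N → ℝ | #{i | ω i ∈ Set.Ioi (1 - ε)} < k + 1}
  have hevent : {ω : Fin N → ℝ | 1 - ε < ω (Tuple.sort ω ⟨N - k - 1, by omega⟩)} = badᶜ := by
    ext ω
    have hsplit := card_filter_add_card_filter_not (s := univ) (fun i => ω i ≤ 1 - ε)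
    simp only [Set.mem_ofPred_eq, Set.mem_compl_iff, Tuple.lt_apply_sort_iff_card_le, bad,
      Set.mem_Ioi, not_le, card_univ, Fintype.card_fin] at hsplit ⊢
    omega
  have hbad : Measure.pi (fun _ => μ) bad ≤ ENNReal.ofReal β := by
    rw [pi_setOf_card_filter_mem_lt_eq μ measurableSet_Ioi, Set.compl_Ioi,
      volume_restrict_Icc_zero_one_Ioi (by linarith),
      volume_restrict_Icc_zero_one_Iic (by linarith),
      sub_sub_cancel, Fintype.card_fin]
    refine le_trans (le_of_eq ?_) (ENNReal.ofReal_le_ofReal hsum)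
    rw [ENNReal.ofReal_sum_of_nonneg fun i _ => by positivity]
    refine sum_congr rfl fun i _ => ?_
    rw [ENNReal.ofReal_mul (by positivity), ENNReal.ofReal_mul (by positivity),
      ENNReal.ofReal_natCast, ENNReal.ofReal_pow hε0.le, ENNReal.ofReal_pow (by linarith)]
  calc ENNReal.ofReal (1 - β) = 1 - ENNReal.ofReal β := by
        rw [ENNReal.ofReal_sub 1 hβ.1.le, ENNReal.ofReal_one]
    _ ≤ Measure.pi (fun _ => μ) Set.univ - Measure.pi (fun _ => μ) bad := by
        rw [measure_univ]; exact tsub_le_tsub_left hbad 1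
    _ ≤ Measure.pi (fun _ => μ) badᶜ := by rw [Set.compl_eq_univ_sdiff]; exact le_measure_sdiff
    _ = _ := by rw [hevent]
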